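/- Fix n ∈ ℕ and c = (c_1,…,c_n) ∈ (0,∞)^n with geometric mean γ = (∏_{k=1}^n c_k)^{1/n}, and let c* = (γ, γ, …, γ). Then ν₊(c) ≤ ν₊(c*) and ν̄(c) ≤ ν̄(c*). -/

import Mathlib

open Polynomial

/-- The polynomial `P(z; c) = ∏ₖ (z + cₖ)` over `ℂ`, for `c ∈ ℝⁿ`. -/
noncomputable def Pc {n : ℕ} (c : Fin n → ℝ) : Polynomial ℂ :=
  ∏ k, (X + C (c k : ℂ))

/-- The number of roots of `P(z; c) = 1`, counted with multiplicity, in the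
open right half-plane `{z : 0 < Re z}`. -/
noncomputable def nuPlus {n : ℕ} (c : Fin n → ℝ) : ℕ :=
  Multiset.card ((Pc c - 1).roots.filter (fun z => 0 < z.re))

/-- The number of roots of `P(z; c) = 1`, counted with multiplicity, in the
closed right half-plane `{z : 0 ≤ Re z}`. -/
noncomputable def nuBar {n : ℕ} (c : Fin n → ℝ) : ℕ :=
  Multiset.card ((Pc c - 1).roots.filter (fun z => 0 ≤ z.re))

variable {n : ℕ} {c : Fin n → ℝ}

lemma Pc_natDegree : (Pc c).natDegree = n := by
  rw [Pc, natDegree_prod]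
  · simp
  · intro k _; exact X_add_C_ne_zero (c k : ℂ)

lemma Pc_sub_one_ne (hn : n ≠ 0) : Pc c - 1 ≠ 0 := by
  intro h
  have h1 : Pc c = 1 := by linear_combination (norm := ring_nf) h
  have := Pc_natDegree (c := c)
  rw [h1, natDegree_one] at this
  exact hn this.symm

lemma Pc_eval (z : ℂ) : (Pc c).eval z = ∏ k, (z + (c k : ℂ)) := by
  simp [Pc, eval_prod]

lemma mem_roots_iff (hn : n ≠ 0) (z : ℂ) :
    z ∈ (Pc c - 1).roots ↔ ∏ k, (z + (c k : ℂ)) = 1 := by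
  rw [mem_roots (Pc_sub_one_ne hn), IsRoot.def, eval_sub, eval_one, Pc_eval, sub_eq_zero]

noncomputable def Aarg {n : ℕ} (c : Fin n → ℝ) (z : ℂ) : ℝ := ∑ k, (z + (c k : ℂ)).arg

lemma abs_prod_eq_one {z : ℂ} (hz : ∏ k, (z + (c k : ℂ)) = 1) :
    ∏ k, ‖z + (c k : ℂ)‖ = 1 ∧ Complex.exp ((Aarg c z : ℝ) * Complex.I) = 1 := by
  have h0 : ∏ k, ((‖z + (c k : ℂ)‖ : ℂ) * Complex.exp ((z + (c k : ℂ)).arg * Complex.I)) = 1 := by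
    rw [Finset.prod_congr rfl (fun k _ => Complex.norm_mul_exp_arg_mul_I (z + (c k : ℂ)))]
    exact hz
  rw [Finset.prod_mul_distrib, ← Complex.exp_sum] at h0
  have hsum : ∑ k : Fin n, ((z + (c k : ℂ)).arg : ℂ) * Complex.I = ((Aarg c z : ℝ) : ℂ) * Complex.I := by
    rw [← Finset.sum_mul, Aarg]; push_cast; ring
  rw [hsum] at h0
  have habs : ∏ k, ‖z + (c k : ℂ)‖ = 1 := by
    have := congrArg norm h0
    rwa [norm_mul, Complex.norm_exp_ofReal_mul_I, mul_one, norm_prod, norm_one,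
      Finset.prod_congr rfl (fun k _ => Complex.norm_real _),
      Finset.prod_congr rfl (fun k _ => Real.norm_of_nonneg (norm_nonneg _))] at this
  constructor
  · exact habs
  · have : ((∏ k, ‖z + (c k : ℂ)‖ : ℝ) : ℂ) * Complex.exp ((Aarg c z : ℝ) * Complex.I) = 1 := by
      push_cast; exact h0
    rwa [habs, Complex.ofReal_one, one_mul] at this

lemma Aarg_int {z : ℂ} (hz : ∏ k, (z + (c k : ℂ)) = 1) :
    ∃ m : ℤ, Aarg c z = m * (2 * Real.pi) := by
  obtain ⟨-, h⟩ := abs_prod_eq_one hz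
  rw [Complex.exp_eq_one_iff] at h
  obtain ⟨m, hm⟩ := h
  refine ⟨m, ?_⟩
  have hm2 : ((Aarg c z : ℝ) : ℂ) * Complex.I = ((m * (2 * Real.pi) : ℝ) : ℂ) * Complex.I := by
    rw [hm]; push_cast; ring
  have := mul_right_cancel₀ Complex.I_ne_zero hm2
  exact_mod_cast this

lemma conj_root {z : ℂ} (hz : ∏ k, (z + (c k : ℂ)) = 1) :
    ∏ k, ((starRingEnd ℂ) z + (c k : ℂ)) = 1 := by
  have : ∏ k, ((starRingEnd ℂ) z + (c k : ℂ)) = (starRingEnd ℂ) (∏ k, (z + (c k : ℂ))) := by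
    rw [map_prod]
    exact Finset.prod_congr rfl (fun k _ => by rw [map_add, Complex.conj_ofReal])
  rw [this, hz, map_one]

lemma fac_re_pos (hc : ∀ k, 0 < c k) {z : ℂ} (hz : 0 ≤ z.re) (k : Fin n) :
    0 < (z + (c k : ℂ)).re := by
  simp only [Complex.add_re, Complex.ofReal_re]
  linarith [hc k]

lemma fac_ne_zero (hc : ∀ k, 0 < c k) {z : ℂ} (hz : 0 ≤ z.re) (k : Fin n) :
    z + (c k : ℂ) ≠ 0 := by
  intro h
  have := fac_re_pos hc hz k
  rw [h] at this; simp at this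

lemma arg_sign {w : ℂ} (hw : 0 < w.re) :
    (0 < w.im → 0 < w.arg) ∧ (w.im = 0 → w.arg = 0) ∧ (w.im < 0 → w.arg < 0) := by
  refine ⟨fun h => ?_, fun h => Complex.arg_eq_zero_iff.2 ⟨hw.le, h⟩, fun h => Complex.arg_neg_iff.2 h⟩
  rcases lt_or_eq_of_le (Complex.arg_nonneg_iff.2 h.le) with h' | h'
  · exact h'
  · exfalso
    have := (Complex.arg_eq_zero_iff.1 h'.symm).2
    linarith

lemma arg_lt_half_pi {w : ℂ} (hw : 0 < w.re) : |w.arg| < Real.pi / 2 :=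
  Complex.abs_arg_lt_pi_div_two_iff.2 (Or.inl hw)

lemma sign_Aarg (hn : n ≠ 0) (hc : ∀ k, 0 < c k) {z : ℂ} (hz : 0 ≤ z.re) :
    (0 < z.im → 0 < Aarg c z) ∧ (z.im = 0 → Aarg c z = 0) ∧ (z.im < 0 → Aarg c z < 0) := by
  have him : ∀ k : Fin n, (z + (c k : ℂ)).im = z.im := by intro k; simp
  have hre := fac_re_pos hc hz
  refine ⟨fun h => ?_, fun h => ?_, fun h => ?_⟩
  · exact Finset.sum_pos (fun k _ => (arg_sign (hre k)).1 (by rw [him k]; exact h))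
      (Finset.univ_nonempty_iff.2 ⟨⟨0, Nat.pos_of_ne_zero hn⟩⟩)
  · exact Finset.sum_eq_zero (fun k _ => (arg_sign (hre k)).2.1 (by rw [him k]; exact h))
  · exact Finset.sum_neg (fun k _ => (arg_sign (hre k)).2.2 (by rw [him k]; exact h))
      (Finset.univ_nonempty_iff.2 ⟨⟨0, Nat.pos_of_ne_zero hn⟩⟩)

lemma Aarg_conj (hc : ∀ k, 0 < c k) {z : ℂ} (hz : 0 ≤ z.re) :
    Aarg c ((starRingEnd ℂ) z) = - Aarg c z := by
  rw [Aarg, Aarg, ← Finset.sum_neg_distrib]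
  refine Finset.sum_congr rfl (fun k _ => ?_)
  have h1 : (starRingEnd ℂ) z + (c k : ℂ) = (starRingEnd ℂ) (z + (c k : ℂ)) := by
    rw [map_add, Complex.conj_ofReal]
  rw [h1, Complex.arg_conj]
  have : (z + (c k : ℂ)).arg ≠ Real.pi := by
    intro h
    have := Complex.arg_eq_pi_iff.1 h
    have := fac_re_pos hc hz k
    linarith [this, (Complex.arg_eq_pi_iff.1 h).1]
  simp [this]

lemma gamma_le_one (hn : n ≠ 0) (hc : ∀ k, 0 < c k) {γ : ℝ} (hγ : 0 < γ)
    (hg : ∏ k, c k = γ ^ n) {z : ℂ} (hz : 0 ≤ z.re)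
    (hzr : ∏ k, (z + (c k : ℂ)) = 1) : γ ≤ 1 := by
  have habs := (abs_prod_eq_one hzr).1
  have h1 : γ ^ n ≤ 1 := by
    rw [← hg, ← habs]
    refine Finset.prod_le_prod (fun k _ => (hc k).le) (fun k _ => ?_)
    calc c k ≤ (z + (c k : ℂ)).re := by simp [Complex.add_re]; linarith
    _ ≤ ‖z + (c k : ℂ)‖ := Complex.re_le_norm _
  by_contra h
  push_neg at h
  exact absurd h1 (not_le.2 (one_lt_pow₀ (by linarith) hn))

lemma arg_eq_arctan {w : ℂ} (hw : 0 < w.re) : w.arg = Real.arctan (w.im / w.re) := by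
  have h1 := arg_lt_half_pi hw
  rw [abs_lt] at h1
  rw [← Complex.tan_arg, Real.arctan_tan h1.1 h1.2]

lemma abs_fac_lt (hc : ∀ k, 0 < c k) {z w : ℂ}
    (hz : 0 ≤ z.re) (h1 : z.re ≤ w.re) (hzi : 0 ≤ z.im) (h2 : z.im ≤ w.im)
    (hne : z.re < w.re ∨ z.im < w.im) (k : Fin n) :
    ‖z + (c k : ℂ)‖ < ‖w + (c k : ℂ)‖ := by
  have hk := hc k
  rw [Complex.norm_def, Complex.norm_def]
  apply Real.sqrt_lt_sqrt (Complex.normSq_nonneg _)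
  rw [Complex.normSq_apply, Complex.normSq_apply]
  simp only [Complex.add_re, Complex.add_im, Complex.ofReal_re, Complex.ofReal_im, add_zero]
  rcases hne with h | h
  · nlinarith
  · nlinarith

lemma prod_abs_lt (hn : n ≠ 0) (hc : ∀ k, 0 < c k) {z w : ℂ}
    (hz : 0 ≤ z.re) (h1 : z.re ≤ w.re) (hzi : 0 ≤ z.im) (h2 : z.im ≤ w.im)
    (hne : z.re < w.re ∨ z.im < w.im) :
    ∏ k, ‖z + (c k : ℂ)‖ < ∏ k, ‖w + (c k : ℂ)‖ := by
  refine Finset.prod_lt_prod_of_nonempty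
    (fun k _ => norm_pos_iff.mpr (fac_ne_zero hc hz k))
    (fun k _ => abs_fac_lt hc hz h1 hzi h2 hne k)
    (Finset.univ_nonempty_iff.2 ⟨⟨0, Nat.pos_of_ne_zero hn⟩⟩)

lemma real_uniq (hn : n ≠ 0) (hc : ∀ k, 0 < c k) {z w : ℂ}
    (hz : 0 ≤ z.re) (hw : 0 ≤ w.re) (hzi : z.im = 0) (hwi : w.im = 0)
    (hzr : ∏ k, (z + (c k : ℂ)) = 1) (hwr : ∏ k, (w + (c k : ℂ)) = 1) : z = w := by
  have key : ∀ {u v : ℂ}, 0 ≤ u.re → u.im = 0 → v.im = 0 → u.re < v.re →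
      (∏ k, (u + (c k : ℂ)) = 1) → (∏ k, (v + (c k : ℂ)) = 1) → False := by
    intro u v hu hui hvi huv hur hvr
    have := prod_abs_lt hn hc hu huv.le (le_of_eq hui.symm) (by rw [hui, hvi]) (Or.inl huv)
    rw [(abs_prod_eq_one hur).1, (abs_prod_eq_one hvr).1] at this
    exact lt_irrefl 1 this
  rcases lt_trichotomy z.re w.re with h | h | h
  · exact absurd (key hz hzi hwi h hzr hwr) not_false
  · exact Complex.ext h (by rw [hzi, hwi])
  · exact absurd (key hw hwi hzi h hwr hzr) not_false

lemma upper_inj (hn : n ≠ 0) (hc : ∀ k, 0 < c k) {z w : ℂ}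
    (hz : 0 ≤ z.re) (hw : 0 ≤ w.re) (hzi : 0 < z.im) (hwi : 0 < w.im)
    (hza : ∏ k, ‖z + (c k : ℂ)‖ = 1)
    (hwa : ∏ k, ‖w + (c k : ℂ)‖ = 1)
    (hA : Aarg c z = Aarg c w) : z = w := by
  -- key : if z.re < w.re (with the prod-abs constraints) we get a contradiction
  have key : ∀ {u v : ℂ}, 0 ≤ u.re → 0 ≤ v.re → 0 < u.im → 0 < v.im →
      (∏ k, ‖u + (c k : ℂ)‖ = 1) → (∏ k, ‖v + (c k : ℂ)‖ = 1) →
      Aarg c u = Aarg c v → u.re < v.re → False := by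
    intro u v hu hv hui hvi hua hva hAA huv
    -- v.im < u.im, else prod strictly bigger
    have him : v.im < u.im := by
      by_contra hle
      push_neg at hle
      have := prod_abs_lt hn hc hu huv.le hui.le hle (Or.inl huv)
      rw [hua, hva] at this
      exact lt_irrefl 1 this
    -- then Aarg u > Aarg v termwise
    have : Aarg c v < Aarg c u := by
      refine Finset.sum_lt_sum_of_nonempty (Finset.univ_nonempty_iff.2 ⟨⟨0, Nat.pos_of_ne_zero hn⟩⟩)
        (fun k _ => ?_)
      have hru := fac_re_pos hc hu k
      have hrv := fac_re_pos hc hv k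
      rw [arg_eq_arctan hru, arg_eq_arctan hrv]
      apply Real.arctan_strictMono
      simp only [Complex.add_re, Complex.add_im, Complex.ofReal_re, Complex.ofReal_im, add_zero]
      simp only [Complex.add_re, Complex.add_im, Complex.ofReal_re, Complex.ofReal_im, add_zero] at hru hrv
      rw [div_lt_div_iff₀ hrv hru]
      nlinarith
    rw [hAA] at this
    exact lt_irrefl _ this
  rcases lt_trichotomy z.re w.re with h | h | h
  · exact absurd (key hz hw hzi hwi hza hwa hA h) not_false
  · -- equal re; show equal im
    rcases lt_trichotomy z.im w.im with h2 | h2 | h2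
    · exfalso
      have := prod_abs_lt hn hc hz h.le hzi.le h2.le (Or.inr h2)
      rw [hza, hwa] at this; exact lt_irrefl 1 this
    · exact Complex.ext h h2
    · exfalso
      have := prod_abs_lt hn hc hw h.ge hwi.le h2.le (Or.inr h2)
      rw [hza, hwa] at this; exact lt_irrefl 1 this
  · exact absurd (key hw hz hwi hzi hwa hza hA.symm h) not_false

lemma eval_deriv (hn : n ≠ 0) (hc : ∀ k, 0 < c k) {z : ℂ} (hz : 0 ≤ z.re)
    (hzr : ∏ k, (z + (c k : ℂ)) = 1) :
    (Pc c - 1).derivative.eval z = ∑ k, (z + (c k : ℂ))⁻¹ := by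
  rw [derivative_sub, derivative_one, sub_zero]
  have h1 : Pc c = (Multiset.map (fun k => X + C ((c k : ℂ))) Finset.univ.val).prod :=
    Finset.prod_eq_multiset_prod _ _
  rw [h1, derivative_prod]
  have hsum : ∀ M : Multiset (Polynomial ℂ), eval z M.sum = (M.map (eval z)).sum := by
    intro M; simpa using map_multiset_sum (evalRingHom z) M
  rw [hsum, Multiset.map_map]
  have h2 : ∀ k : Fin n,
      (eval z ∘ fun i => (Multiset.map (fun k => X + C ((c k : ℂ))) (Finset.univ.val.erase i)).prod
        * derivative (X + C ((c i : ℂ)))) k = (z + (c k : ℂ))⁻¹ := by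
    intro k
    simp only [Function.comp_apply, derivative_X_add_C, mul_one]
    rw [eval_multiset_prod, Multiset.map_map]
    have h3 : (eval z ∘ fun i => X + C ((c i : ℂ))) = fun i => z + (c i : ℂ) := by
      funext i; simp
    rw [h3, ← Finset.erase_val, ← Finset.prod_eq_multiset_prod]
    symm
    apply inv_eq_of_mul_eq_one_right
    exact (Finset.mul_prod_erase Finset.univ (fun i => z + (c i : ℂ)) (Finset.mem_univ k)).trans hzr
  calc (Multiset.map _ Finset.univ.val).sum
      = (Multiset.map (fun k => (z + (c k : ℂ))⁻¹) Finset.univ.val).sum := by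
        congr 1; exact Multiset.map_congr rfl (fun k _ => h2 k)
    _ = ∑ k, (z + (c k : ℂ))⁻¹ := (Finset.sum_eq_multiset_sum _ _).symm

lemma count_eq_one (hn : n ≠ 0) (hc : ∀ k, 0 < c k) {z : ℂ}
    (hz : 0 ≤ z.re) (hzr : z ∈ (Pc c - 1).roots) :
    (Pc c - 1).roots.count z = 1 := by
  have hne := Pc_sub_one_ne (c := c) hn
  have hprod := (mem_roots_iff hn z).1 hzr
  have hd : (Pc c - 1).derivative.eval z ≠ 0 := by
    rw [eval_deriv hn hc hz hprod]
    intro h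
    have hre : (∑ k, (z + (c k : ℂ))⁻¹).re = 0 := by rw [h]; simp
    rw [Complex.re_sum] at hre
    have : 0 < ∑ k : Fin n, ((z + (c k : ℂ))⁻¹).re := by
      refine Finset.sum_pos (fun k _ => ?_)
        (Finset.univ_nonempty_iff.2 ⟨⟨0, Nat.pos_of_ne_zero hn⟩⟩)
      rw [Complex.inv_re]
      exact div_pos (fac_re_pos hc hz k)
        (Complex.normSq_pos.2 (fac_ne_zero hc hz k))
    rw [hre] at this; exact lt_irrefl 0 this
  rw [count_roots]
  have h1 : 1 ≤ (Pc c - 1).rootMultiplicity z := by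
    rw [← count_roots]; exact Multiset.one_le_count_iff_mem.2 hzr
  have h2 : ¬ 1 < (Pc c - 1).rootMultiplicity z := by
    rw [one_lt_rootMultiplicity_iff_isRoot hne]
    rintro ⟨-, h⟩
    exact hd h
  omega

lemma card_filter_eq (hn : n ≠ 0) (hc : ∀ k, 0 < c k) (p : ℂ → Prop) [DecidablePred p]
    (hp : ∀ z, p z → 0 ≤ z.re) :
    Multiset.card ((Pc c - 1).roots.filter p)
      = ((Pc c - 1).roots.toFinset.filter p).card := by
  set s := (Pc c - 1).roots
  rw [← Multiset.toFinset_sum_count_eq (s.filter p), Multiset.toFinset_filter]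
  rw [Finset.card_eq_sum_ones]
  refine Finset.sum_congr rfl (fun z hzmem => ?_)
  rw [Finset.mem_filter, Multiset.mem_toFinset] at hzmem
  rw [Multiset.count_filter_of_pos hzmem.2]
  exact count_eq_one hn hc (hp z hzmem.2) hzmem.1

lemma jensen_bound (hn : n ≠ 0) (hc : ∀ k, 0 < c k) {γ : ℝ} (hγ : 0 < γ)
    (hg : ∏ k, c k = γ ^ n) {z : ℂ} (hz : 0 ≤ z.re) (hzi : 0 < z.im)
    (hzr : ∏ k, (z + (c k : ℂ)) = 1) :
    Aarg c z / n ≤ Real.arccos γ ∧ (0 < z.re → Aarg c z / n < Real.arccos γ) := by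
  have hne : (Finset.univ : Finset (Fin n)).Nonempty :=
    Finset.univ_nonempty_iff.2 ⟨⟨0, Nat.pos_of_ne_zero hn⟩⟩
  have hNn : (0:ℝ) < n := by exact_mod_cast Nat.pos_of_ne_zero hn
  have hγ1 : γ ≤ 1 := gamma_le_one hn hc hγ hg hz hzr
  have habs := (abs_prod_eq_one hzr).1
  set α : Fin n → ℝ := fun k => (z + (c k : ℂ)).arg with hα
  have hrepos := fac_re_pos hc hz
  have hα0 : ∀ k, 0 < α k := fun k =>
    (arg_sign (hrepos k)).1 (by simp [hzi])
  have hα2 : ∀ k, α k < Real.pi / 2 := fun k => (abs_lt.1 (arg_lt_half_pi (hrepos k))).2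
  set w : Fin n → ℝ := fun _ => 1 / n with hw
  have hw0 : ∀ k ∈ Finset.univ, 0 ≤ w k := fun k _ => by positivity
  have hw1 : ∑ k : Fin n, w k = 1 := by
    rw [Finset.sum_const, Finset.card_univ, Fintype.card_fin, nsmul_eq_mul]
    field_simp
  have hcos_pos : ∀ k, 0 < Real.cos (α k) :=
    fun k => Real.cos_pos_of_mem_Ioo ⟨by linarith [hα0 k, Real.pi_pos], hα2 k⟩
  -- Jensen
  have hjen : ∑ k, w k • Real.cos (α k) ≤ Real.cos (∑ k, w k • α k) :=
    (strictConcaveOn_cos_Icc.concaveOn).le_map_sum hw0 hw1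
      (fun k _ => ⟨by linarith [hα0 k, Real.pi_pos], (hα2 k).le⟩)
  have hmean : ∑ k, w k • α k = Aarg c z / n := by
    simp only [smul_eq_mul, hw, ← Finset.mul_sum]
    rw [Aarg]; ring
  -- AM-GM
  have hamgm := Real.geom_mean_le_arith_mean_weighted Finset.univ w (fun k => Real.cos (α k))
    hw0 hw1 (fun k _ => (hcos_pos k).le)
  have hrpow : ∏ k, Real.cos (α k) ^ (1/(n:ℝ)) = (∏ k, Real.cos (α k)) ^ (1/(n:ℝ)) :=
    Real.finset_prod_rpow _ _ (fun k _ => (hcos_pos k).le) _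
  -- product of cosines equals product of real parts
  have hcosprod : ∏ k, Real.cos (α k) = ∏ k, (z + (c k : ℂ)).re := by
    have : ∀ k : Fin n, Real.cos (α k) = (z + (c k : ℂ)).re / ‖z + (c k : ℂ)‖ :=
      fun k => Complex.cos_arg (fac_ne_zero hc hz k)
    rw [Finset.prod_congr rfl (fun k _ => this k), Finset.prod_div_distrib, habs, div_one]
  have hprodre : γ ^ n ≤ ∏ k, (z + (c k : ℂ)).re := by
    rw [← hg]
    refine Finset.prod_le_prod (fun k _ => (hc k).le) (fun k _ => ?_)
    simp only [Complex.add_re, Complex.ofReal_re]; linarith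
  have hprodre' : 0 < z.re → γ ^ n < ∏ k, (z + (c k : ℂ)).re := by
    intro h
    rw [← hg]
    refine Finset.prod_lt_prod_of_nonempty (fun k _ => hc k) (fun k _ => ?_) hne
    simp only [Complex.add_re, Complex.ofReal_re]; linarith
  have hgam : (γ ^ n) ^ (1/(n:ℝ)) = γ := by
    rw [← Real.rpow_natCast γ n, ← Real.rpow_mul hγ.le]
    rw [mul_one_div, div_self (ne_of_gt hNn), Real.rpow_one]
  -- chain
  have hchain : γ ≤ Real.cos (Aarg c z / n) := by
    calc γ = (γ ^ n) ^ (1/(n:ℝ)) := hgam.symm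
    _ ≤ (∏ k, Real.cos (α k)) ^ (1/(n:ℝ)) := by
        apply Real.rpow_le_rpow (by positivity) _ (by positivity)
        rw [hcosprod]; exact hprodre
    _ = ∏ k, Real.cos (α k) ^ (1/(n:ℝ)) := hrpow.symm
    _ ≤ ∑ k, w k * Real.cos (α k) := hamgm
    _ ≤ Real.cos (∑ k, w k • α k) := by simpa [smul_eq_mul] using hjen
    _ = Real.cos (Aarg c z / n) := by rw [hmean]
  have hchain' : 0 < z.re → γ < Real.cos (Aarg c z / n) := by
    intro h
    calc γ = (γ ^ n) ^ (1/(n:ℝ)) := hgam.symm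
    _ < (∏ k, Real.cos (α k)) ^ (1/(n:ℝ)) := by
        apply Real.rpow_lt_rpow (by positivity) _ (by positivity)
        rw [hcosprod]; exact hprodre' h
    _ = ∏ k, Real.cos (α k) ^ (1/(n:ℝ)) := hrpow.symm
    _ ≤ ∑ k, w k * Real.cos (α k) := hamgm
    _ ≤ Real.cos (∑ k, w k • α k) := by simpa [smul_eq_mul] using hjen
    _ = Real.cos (Aarg c z / n) := by rw [hmean]
  -- A/n ∈ (0, π/2)
  have hA0 : 0 < Aarg c z := Finset.sum_pos (fun k _ => hα0 k) hne
  have hAup : Aarg c z < n * (Real.pi / 2) := by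
    have := Finset.sum_lt_sum_of_nonempty hne (f := α) (g := fun _ => Real.pi / 2)
      (fun k _ => hα2 k)
    rw [Finset.sum_const, Finset.card_univ, Fintype.card_fin, nsmul_eq_mul] at this
    exact this
  have hmean2 : Aarg c z / n < Real.pi / 2 := by
    rw [div_lt_iff₀ hNn]; linarith [hAup]
  have harc0 : 0 ≤ Real.arccos γ := Real.arccos_nonneg γ
  have hcosarc : Real.cos (Real.arccos γ) = γ := Real.cos_arccos (by linarith) hγ1
  constructor
  · by_contra hcon
    push_neg at hcon
    have := Real.cos_lt_cos_of_nonneg_of_le_pi harc0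
      (by linarith [Real.pi_pos, hmean2]) hcon
    rw [hcosarc] at this
    linarith [hchain]
  · intro h
    by_contra hcon
    push_neg at hcon
    have := Real.cos_le_cos_of_nonneg_of_le_pi harc0
      (by linarith [Real.pi_pos, hmean2]) hcon
    rw [hcosarc] at this
    linarith [hchain' h]

lemma abs_bound (hn : n ≠ 0) (hc : ∀ k, 0 < c k) {γ : ℝ} (hγ : 0 < γ)
    (hg : ∏ k, c k = γ ^ n) {z : ℂ} (hz : 0 ≤ z.re)
    (hzr : ∏ k, (z + (c k : ℂ)) = 1) :
    |Aarg c z / n| ≤ Real.arccos γ ∧ (0 < z.re → |Aarg c z / n| < Real.arccos γ) := by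
  have hNn : (0:ℝ) < n := by exact_mod_cast Nat.pos_of_ne_zero hn
  rcases lt_trichotomy z.im 0 with h | h | h
  · -- lower: use the conjugate
    set w := (starRingEnd ℂ) z with hwdef
    have hw : 0 ≤ w.re := by rw [Complex.conj_re]; exact hz
    have hwi : 0 < w.im := by rw [Complex.conj_im]; linarith
    have hwr : ∏ k, (w + (c k : ℂ)) = 1 := conj_root hzr
    have hAc : Aarg c w = - Aarg c z := Aarg_conj hc hz
    have hj := jensen_bound hn hc hγ hg hw hwi hwr
    have hApos : 0 < Aarg c w := (sign_Aarg hn hc hw).1 hwi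
    have habs : |Aarg c z / n| = Aarg c w / n := by
      rw [hAc, abs_div, abs_of_pos hNn, abs_of_neg (by linarith : Aarg c z < 0)]
    rw [habs]
    exact ⟨hj.1, fun hre => hj.2 (by rw [hwdef, Complex.conj_re]; exact hre)⟩
  · -- real
    have hA0 : Aarg c z = 0 := (sign_Aarg hn hc hz).2.1 h
    rw [hA0, zero_div, abs_zero]
    refine ⟨Real.arccos_nonneg γ, fun hre => Real.arccos_pos.2 ?_⟩
    -- γ < 1 from a real root with positive real part
    have habs := (abs_prod_eq_one hzr).1
    have h1 : γ ^ n < 1 := by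
      rw [← hg, ← habs]
      refine Finset.prod_lt_prod_of_nonempty (fun k _ => hc k) (fun k _ => ?_)
        (Finset.univ_nonempty_iff.2 ⟨⟨0, Nat.pos_of_ne_zero hn⟩⟩)
      calc c k < (z + (c k : ℂ)).re := by simp [Complex.add_re]; linarith
      _ ≤ ‖z + (c k : ℂ)‖ := Complex.re_le_norm _
    by_contra hcon
    push_neg at hcon
    have : (1:ℝ) ≤ γ ^ n := by
      calc (1:ℝ) = 1 ^ n := (one_pow n).symm
      _ ≤ γ ^ n := pow_le_pow_left₀ zero_le_one hcon n
    exact absurd h1 (not_lt.2 this)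
  · -- upper
    have hj := jensen_bound hn hc hγ hg hz h hzr
    have hApos : 0 < Aarg c z := (sign_Aarg hn hc hz).1 h
    have habs : |Aarg c z / n| = Aarg c z / n := abs_of_pos (div_pos hApos hNn)
    rw [habs]
    exact hj

noncomputable def Phi {n : ℕ} (c : Fin n → ℝ) (γ : ℝ) (z : ℂ) : ℂ :=
  Complex.exp ((Aarg c z / n : ℝ) * Complex.I) - (γ : ℂ)

lemma master (hn : n ≠ 0) (hc : ∀ k, 0 < c k) {γ : ℝ} (hγ : 0 < γ)
    (hg : ∏ k, c k = γ ^ n) (p : ℂ → Prop) [DecidablePred p]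
    (hp : ∀ z, p z → 0 ≤ z.re)
    (himg : ∀ z, (∏ k, (z + (c k : ℂ)) = 1) → p z → p (Phi c γ z)) :
    Multiset.card ((Pc c - 1).roots.filter p)
      ≤ Multiset.card ((Pc (fun _ : Fin n => γ) - 1).roots.filter p) := by
  have hNn : (0:ℝ) < n := by exact_mod_cast Nat.pos_of_ne_zero hn
  set cs : Fin n → ℝ := fun _ => γ with hcsdef
  have hcs : ∀ k : Fin n, 0 < cs k := fun _ => hγ
  rw [card_filter_eq hn hc p hp]
  have h2 : ((Pc cs - 1).roots.toFinset.filter p).card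
      ≤ Multiset.card ((Pc cs - 1).roots.filter p) := by
    rw [← Multiset.toFinset_filter]
    exact Multiset.toFinset_card_le _
  refine le_trans (Finset.card_le_card_of_injOn (Phi c γ) ?_ ?_) h2
  · -- maps to
    intro z hzS
    rw [Finset.mem_coe, Finset.mem_filter, Multiset.mem_toFinset] at hzS ⊢
    obtain ⟨hzr, hpz⟩ := hzS
    have hroot := (mem_roots_iff hn z).1 hzr
    refine ⟨(mem_roots_iff (c := cs) hn _).2 ?_, himg z hroot hpz⟩
    have hPhi : Phi c γ z + (γ : ℂ) = Complex.exp ((Aarg c z / n : ℝ) * Complex.I) := by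
      rw [Phi]; ring
    calc ∏ k : Fin n, (Phi c γ z + ((cs k : ℝ) : ℂ))
        = (Complex.exp ((Aarg c z / n : ℝ) * Complex.I)) ^ n := by
          rw [Finset.prod_congr rfl (fun k _ => by rw [hcsdef, hPhi]),
            Finset.prod_const, Finset.card_univ, Fintype.card_fin]
      _ = Complex.exp ((n : ℂ) * (((Aarg c z / n : ℝ)) * Complex.I)) := by
          rw [Complex.exp_nat_mul]
      _ = Complex.exp ((Aarg c z : ℝ) * Complex.I) := by
          congr 1
          have hne' : (n:ℂ) ≠ 0 := Nat.cast_ne_zero.2 hn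
          push_cast
          field_simp
      _ = 1 := (abs_prod_eq_one hroot).2
  · -- injective
    intro z1 hz1 z2 hz2 heq
    rw [Finset.mem_coe, Finset.mem_filter, Multiset.mem_toFinset] at hz1 hz2
    have hr1 := (mem_roots_iff hn z1).1 hz1.1
    have hr2 := (mem_roots_iff hn z2).1 hz2.1
    have hre1 := hp z1 hz1.2
    have hre2 := hp z2 hz2.2
    -- the exponentials are equal
    have hexp : Complex.exp ((Aarg c z1 / n : ℝ) * Complex.I)
        = Complex.exp ((Aarg c z2 / n : ℝ) * Complex.I) := by
      have := congrArg (· + (γ : ℂ)) heq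
      simpa [Phi, sub_add_cancel] using this
    rw [Complex.exp_eq_exp_iff_exists_int] at hexp
    obtain ⟨m, hm⟩ := hexp
    -- extract the real equation
    have hm2 : ((Aarg c z1 / n : ℝ) : ℂ) * Complex.I
        = ((Aarg c z2 / n + m * (2 * Real.pi) : ℝ) : ℂ) * Complex.I := by
      rw [hm]; push_cast; ring
    have hmre : Aarg c z1 / n = Aarg c z2 / n + m * (2 * Real.pi) := by
      have := mul_right_cancel₀ Complex.I_ne_zero hm2
      exact_mod_cast this
    -- bounds force m = 0
    have hb1 := (abs_bound hn hc hγ hg hre1 hr1).1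
    have hb2 := (abs_bound hn hc hγ hg hre2 hr2).1
    have harc : Real.arccos γ ≤ Real.pi / 2 := Real.arccos_le_pi_div_two.2 hγ.le
    have hm0 : m = 0 := by
      by_contra hm0
      have h1 : (1:ℝ) ≤ |(m:ℝ)| := by
        have : (1:ℤ) ≤ |m| := Int.one_le_abs hm0
        exact_mod_cast this
      have habs1 : |Aarg c z1 / n| ≤ Real.pi / 2 := le_trans hb1 harc
      have habs2 : |Aarg c z2 / n| ≤ Real.pi / 2 := le_trans hb2 harc
      have : |(m:ℝ) * (2 * Real.pi)| ≤ Real.pi := by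
        rw [hmre] at habs1
        calc |(m:ℝ) * (2 * Real.pi)| = |Aarg c z2 / n + m * (2*Real.pi) - Aarg c z2 / n| := by
              congr 1; ring
        _ ≤ |Aarg c z2 / n + m * (2*Real.pi)| + |Aarg c z2 / n| := abs_sub _ _
        _ ≤ Real.pi / 2 + Real.pi / 2 := add_le_add habs1 habs2
        _ = Real.pi := by ring
      rw [abs_mul] at this
      have hpi : |2 * Real.pi| = 2 * Real.pi := abs_of_pos (by positivity)
      rw [hpi] at this
      nlinarith [Real.pi_pos]
    rw [hm0] at hmre
    simp only [Int.cast_zero, zero_mul, add_zero] at hmre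
    have hA : Aarg c z1 = Aarg c z2 := by
      have h' := congrArg (fun t => t * (n:ℝ)) hmre
      simpa [div_mul_cancel₀, ne_of_gt hNn] using h'
    -- sign analysis
    have hs1 := sign_Aarg hn hc hre1
    have hs2 := sign_Aarg hn hc hre2
    rcases lt_trichotomy z1.im 0 with h1 | h1 | h1 <;>
      rcases lt_trichotomy z2.im 0 with h2 | h2 | h2
    · -- both lower: conjugate
      have hw1 : 0 ≤ ((starRingEnd ℂ) z1).re := by rw [Complex.conj_re]; exact hre1
      have hw2 : 0 ≤ ((starRingEnd ℂ) z2).re := by rw [Complex.conj_re]; exact hre2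
      have hwi1 : 0 < ((starRingEnd ℂ) z1).im := by rw [Complex.conj_im]; linarith
      have hwi2 : 0 < ((starRingEnd ℂ) z2).im := by rw [Complex.conj_im]; linarith
      have hkey := upper_inj hn hc hw1 hw2 hwi1 hwi2
        (abs_prod_eq_one (conj_root hr1)).1 (abs_prod_eq_one (conj_root hr2)).1
        (by rw [Aarg_conj hc hre1, Aarg_conj hc hre2, hA])
      have := congrArg (starRingEnd ℂ) hkey
      simpa using this
    · exact absurd hA (by have := hs1.2.2 h1; have := hs2.2.1 h2; linarith)
    · exact absurd hA (by have := hs1.2.2 h1; have := hs2.1 h2; linarith)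
    · exact absurd hA (by have := hs1.2.1 h1; have := hs2.2.2 h2; linarith)
    · exact real_uniq hn hc hre1 hre2 h1 h2 hr1 hr2
    · exact absurd hA (by have := hs1.2.1 h1; have := hs2.1 h2; linarith)
    · exact absurd hA (by have := hs1.1 h1; have := hs2.2.2 h2; linarith)
    · exact absurd hA (by have := hs1.1 h1; have := hs2.2.1 h2; linarith)
    · exact upper_inj hn hc hre1 hre2 h1 h2
        (abs_prod_eq_one hr1).1 (abs_prod_eq_one hr2).1 hA

lemma Phi_re {γ : ℝ} (z : ℂ) : (Phi c γ z).re = Real.cos (Aarg c z / n) - γ := by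
  rw [Phi]
  rw [Complex.sub_re, Complex.exp_ofReal_mul_I_re, Complex.ofReal_re]

/-- if `c ∈ (0,∞)ⁿ` has geometric mean `γ` and `c* = (γ,…,γ)`,
then `ν₊(c) ≤ ν₊(c*)` and `ν̄(c) ≤ ν̄(c*)`. -/
theorem stmt1 (n : ℕ) (c : Fin n → ℝ) (hc : ∀ k, 0 < c k)
    (γ : ℝ) (hγ : 0 < γ) (hg : ∏ k, c k = γ ^ n) :
    nuPlus c ≤ nuPlus (fun _ : Fin n => γ) ∧ nuBar c ≤ nuBar (fun _ : Fin n => γ) := by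
  rcases Nat.eq_zero_or_pos n with hn | hn
  · subst hn
    constructor <;> simp [nuPlus, nuBar, Pc]
  · have hn' : n ≠ 0 := Nat.pos_iff_ne_zero.1 hn
    constructor
    · refine master hn' hc hγ hg (fun z => 0 < z.re) (fun z h => h.le) ?_
      intro z hroot hpz
      have hγ1 : γ ≤ 1 := gamma_le_one hn' hc hγ hg hpz.le hroot
      have hb := (abs_bound hn' hc hγ hg hpz.le hroot).2 hpz
      have hcos := Real.cos_lt_cos_of_nonneg_of_le_pi (abs_nonneg (Aarg c z / n))
        (Real.arccos_le_pi γ) hb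
      rw [Real.cos_arccos (by linarith) hγ1, Real.cos_abs] at hcos
      have := Phi_re (c := c) (γ := γ) z
      simp only [gt_iff_lt]
      rw [this]
      linarith
    · refine master hn' hc hγ hg (fun z => 0 ≤ z.re) (fun z h => h) ?_
      intro z hroot hpz
      have hγ1 : γ ≤ 1 := gamma_le_one hn' hc hγ hg hpz hroot
      have hb := (abs_bound hn' hc hγ hg hpz hroot).1
      have hcos := Real.cos_le_cos_of_nonneg_of_le_pi (abs_nonneg (Aarg c z / n))
        (Real.arccos_le_pi γ) hb
      rw [Real.cos_arccos (by linarith) hγ1, Real.cos_abs] at hcos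
      have := Phi_re (c := c) (γ := γ) z
      rw [this]
      linarith
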